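/- Let f : ℝ³ ∖ S → (0,∞) be smooth (S a closed set of singular points), and consider the conformally flat metric g_ij(x) = f(x) δ_ij. Fix a unit vector n ∈ ℝ³ and define C_i(x) = f(x) (n × x)_i. Then C is a Killing vector field for g, i.e. ∇_i C_j + ∇_j C_i = 0 where ∇ is the Levi-Civita connection of g, if and only if (x × ∇f(x)) · n = 0 for all x in the domain. -/

import Mathlib

noncomputable section

/-- Cross product on `ℝ³`. -/
def cross3 (u v : EuclideanSpace ℝ (Fin 3)) : EuclideanSpace ℝ (Fin 3) :=
  (WithLp.equiv 2 (Fin 3 → ℝ)).symm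
    ![u 1 * v 2 - u 2 * v 1, u 2 * v 0 - u 0 * v 2, u 0 * v 1 - u 1 * v 0]

/-- Partial derivative in the `i`-th coordinate direction. -/
def pd (i : Fin 3) (g : EuclideanSpace ℝ (Fin 3) → ℝ) (x : EuclideanSpace ℝ (Fin 3)) : ℝ :=
  fderiv ℝ g x (EuclideanSpace.single i 1)

/-- Christoffel symbols `Γ^k_{ij}` of the conformally flat metric `g = f δ`. -/
def Gamma (f : EuclideanSpace ℝ (Fin 3) → ℝ) (k i j : Fin 3) (x : EuclideanSpace ℝ (Fin 3)) : ℝ :=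
  (1 / (2 * f x)) *
    ((if k = j then pd i f x else 0) + (if k = i then pd j f x else 0)
      - (if i = j then pd k f x else 0))

/-- Euclidean gradient of `f`. -/
def grad3 (f : EuclideanSpace ℝ (Fin 3) → ℝ) (x : EuclideanSpace ℝ (Fin 3)) :
    EuclideanSpace ℝ (Fin 3) :=
  (WithLp.equiv 2 (Fin 3 → ℝ)).symm fun i => pd i f x

abbrev E3 := EuclideanSpace ℝ (Fin 3)

lemma comb_eq (a b : ℝ) (p q : Fin 3) :
    (fun y : E3 => a * y p - b * y q)
      = ⇑((a • (EuclideanSpace.proj p : E3 →L[ℝ] ℝ) - b • (EuclideanSpace.proj q : E3 →L[ℝ] ℝ) : E3 →L[ℝ] ℝ)) := rfl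

lemma diff_comb (a b : ℝ) (p q : Fin 3) (x : E3) :
    DifferentiableAt ℝ (fun y : E3 => a * y p - b * y q) x := by
  rw [comb_eq]; exact (ContinuousLinearMap.differentiable _).differentiableAt

lemma pd_comb (a b : ℝ) (p q i : Fin 3) (x : E3) :
    pd i (fun y : E3 => a * y p - b * y q) x
      = a * (if p = i then 1 else 0) - b * (if q = i then 1 else 0) := by
  unfold pd
  rw [comb_eq, ContinuousLinearMap.fderiv]
  simp [EuclideanSpace.single_apply]

lemma pd_mul (f g : E3 → ℝ) (x : E3) (hf : DifferentiableAt ℝ f x)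
    (hg : DifferentiableAt ℝ g x) (i : Fin 3) :
    pd i (fun y => f y * g y) x = pd i f x * g x + f x * pd i g x := by
  unfold pd
  rw [fderiv_fun_mul hf hg]
  simp only [ContinuousLinearMap.add_apply, ContinuousLinearMap.smul_apply, smul_eq_mul]
  ring

lemma cross_fun0 (n : E3) : (fun y : E3 => cross3 n y 0) = fun y : E3 => n 1 * y 2 - n 2 * y 1 := by
  funext y; simp [cross3]

lemma cross_fun1 (n : E3) : (fun y : E3 => cross3 n y 1) = fun y : E3 => n 2 * y 0 - n 0 * y 2 := by
  funext y; simp [cross3]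

lemma cross_fun2 (n : E3) : (fun y : E3 => cross3 n y 2) = fun y : E3 => n 0 * y 1 - n 1 * y 0 := by
  funext y; simp [cross3]

lemma diff_cross (n : E3) (j : Fin 3) (x : E3) :
    DifferentiableAt ℝ (fun y : E3 => cross3 n y j) x := by
  fin_cases j <;> simp only [Fin.zero_eta, Fin.mk_one, Fin.reduceFinMk]
  · rw [cross_fun0]; exact diff_comb _ _ _ _ _
  · rw [cross_fun1]; exact diff_comb _ _ _ _ _
  · rw [cross_fun2]; exact diff_comb _ _ _ _ _

lemma pd_cross (n : E3) (i j : Fin 3) (x : E3) :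
    pd i (fun y : E3 => cross3 n y j) x = cross3 n (EuclideanSpace.single i 1) j := by
  fin_cases j <;> simp only [Fin.zero_eta, Fin.mk_one, Fin.reduceFinMk]
  · rw [cross_fun0, pd_comb]; simp [cross3, EuclideanSpace.single_apply]
  · rw [cross_fun1, pd_comb]; simp [cross3, EuclideanSpace.single_apply]
  · rw [cross_fun2, pd_comb]; simp [cross3, EuclideanSpace.single_apply]

lemma key (f : E3 → ℝ) (x : E3) (hx : DifferentiableAt ℝ f x) (hf0 : f x ≠ 0)
    (n : E3) (i j : Fin 3) :
    (pd i (fun y => f y * cross3 n y j) x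
        - ∑ k : Fin 3, Gamma f k i j x * (f x * cross3 n x k))
      + (pd j (fun y => f y * cross3 n y i) x
        - ∑ k : Fin 3, Gamma f k j i x * (f x * cross3 n x k))
      = (if i = j then 1 else 0) * ∑ k : Fin 3, pd k f x * cross3 n x k := by
  have hpd : ∀ a b : Fin 3, pd a (fun y => f y * cross3 n y b) x
      = pd a f x * cross3 n x b + f x * cross3 n (EuclideanSpace.single a 1) b := by
    intro a b
    rw [pd_mul f _ x hx (diff_cross n b x) a, pd_cross]
  rw [hpd i j, hpd j i]
  simp only [Gamma, Fin.sum_univ_three]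
  fin_cases i <;> fin_cases j <;>
    · simp only [Fin.isValue, show (0:Fin 3) ≠ 1 from by decide, show (0:Fin 3) ≠ 2 from by decide,
        show (1:Fin 3) ≠ 0 from by decide, show (1:Fin 3) ≠ 2 from by decide,
        show (2:Fin 3) ≠ 0 from by decide, show (2:Fin 3) ≠ 1 from by decide,
        if_true, if_pos rfl, reduceIte]
      simp [cross3, EuclideanSpace.single_apply]
      field_simp
      ring

lemma inner_eq (f : E3 → ℝ) (x n : E3) :
    (inner ℝ (cross3 x (grad3 f x)) n : ℝ) = ∑ k : Fin 3, pd k f x * cross3 n x k := by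
  simp [cross3, grad3, PiLp.inner_apply, Fin.sum_univ_three, RCLike.inner_apply]
  ring


/-- For the conformally flat metric `g = f δ` on `ℝ³ ∖ S`, the vector field
`C_i(x) = f(x) (n × x)_i` is a Killing vector (`∇_i C_j + ∇_j C_i = 0`)
iff `(x × ∇f(x)) · n = 0` throughout the domain. -/
theorem rotation_killing_iff (S : Set (EuclideanSpace ℝ (Fin 3))) (hS : IsClosed S)
    (f : EuclideanSpace ℝ (Fin 3) → ℝ)
    (hf : ContDiffOn ℝ (⊤ : ℕ∞) f Sᶜ) (hfpos : ∀ x ∈ Sᶜ, 0 < f x)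
    (n : EuclideanSpace ℝ (Fin 3)) (hn : ‖n‖ = 1) :
    (∀ x ∈ Sᶜ, ∀ i j : Fin 3,
        (pd i (fun y => f y * cross3 n y j) x
            - ∑ k : Fin 3, Gamma f k i j x * (f x * cross3 n x k))
          + (pd j (fun y => f y * cross3 n y i) x
            - ∑ k : Fin 3, Gamma f k j i x * (f x * cross3 n x k)) = 0)
      ↔ (∀ x ∈ Sᶜ, (inner ℝ (cross3 x (grad3 f x)) n : ℝ) = 0) := by
  have hdiff : ∀ x ∈ Sᶜ, DifferentiableAt ℝ f x := fun x hx =>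
    (hf.contDiffAt (hS.isOpen_compl.mem_nhds hx)).differentiableAt (by simp)
  constructor
  · intro h x hx
    have := h x hx 0 0
    rw [key f x (hdiff x hx) (hfpos x hx).ne' n 0 0] at this
    rw [inner_eq]
    simpa using this
  · intro h x hx i j
    rw [key f x (hdiff x hx) (hfpos x hx).ne' n i j]
    rw [← inner_eq, h x hx, mul_zero]
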